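/- arXiv:1402.2663 — 2 statements merged into one kernel-verified Lean document; each statement's English description precedes it below -/
import Mathlib

section
/- For any connected graph G, the strong metric dimension of G equals the vertex cover number of its strong resolving graph: dim_s(G) = α(G_SR). -/
open SimpleGraph

namespace Paper

variable {α β : Type*}

/-- The lexicographic product of two simple graphs. -/
def lexProd (G : SimpleGraph α) (H : SimpleGraph β) : SimpleGraph (α × β) where
  Adj p q := G.Adj p.1 q.1 ∨ (p.1 = q.1 ∧ H.Adj p.2 q.2)
  symm := ⟨by
    rintro ⟨a, b⟩ ⟨c, d⟩ (h | ⟨h1, h2⟩)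
    · exact Or.inl h.symm
    · exact Or.inr ⟨h1.symm, h2.symm⟩⟩
  loopless := ⟨by
    rintro ⟨a, b⟩ (h | ⟨h1, h2⟩)
    · exact G.loopless.irrefl a h
    · exact H.loopless.irrefl b h2⟩

/-- `u` is maximally distant from `v`. -/
def MaxDistant (G : SimpleGraph α) (u v : α) : Prop :=
  ∀ w, G.Adj u w → G.edist v w ≤ G.edist u v

/-- `u` and `v` are mutually maximally distant. -/
def MMD (G : SimpleGraph α) (u v : α) : Prop :=
  MaxDistant G u v ∧ MaxDistant G v u

/-- Two vertices are true twins if they have the same closed neighborhood. -/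
def TrueTwins (G : SimpleGraph α) (u v : α) : Prop :=
  ∀ w, (G.Adj u w ∨ u = w) ↔ (G.Adj v w ∨ v = w)

/-- The boundary of a graph: vertices belonging to some mutually maximally distant pair. -/
def boundary (G : SimpleGraph α) : Set α := {u | ∃ v, u ≠ v ∧ MMD G u v}

/-- The strong resolving graph of `G`, with vertex set the boundary of `G`. -/
def srGraph (G : SimpleGraph α) : SimpleGraph (boundary G) where
  Adj u v := u.1 ≠ v.1 ∧ MMD G u.1 v.1
  symm := ⟨fun u v h => ⟨h.1.symm, h.2.2, h.2.1⟩⟩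
  loopless := ⟨fun u h => h.1 rfl⟩

/-- The graph `G*`: same vertices, `u ~ v` iff `d_G(u,v) ≥ 2` or `u,v` are true twins. -/
def gstar (G : SimpleGraph α) : SimpleGraph α where
  Adj u v := u ≠ v ∧ (2 ≤ G.edist u v ∨ TrueTwins G u v)
  symm := ⟨by
    rintro u v ⟨h1, (h2 | h2)⟩
    · exact ⟨h1.symm, Or.inl (by rwa [G.edist_comm] at h2)⟩
    · exact ⟨h1.symm, Or.inr fun w => (h2 w).symm⟩⟩
  loopless := ⟨fun u h => h.1 rfl⟩

/-- `G*` with its isolated vertices removed. -/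
def gstarMinus (G : SimpleGraph α) : SimpleGraph {x | ∃ y, (gstar G).Adj x y} :=
  SimpleGraph.induce _ (gstar G)

/-- Disjoint union of two graphs. -/
def disjUnion (G : SimpleGraph α) (H : SimpleGraph β) : SimpleGraph (α ⊕ β) where
  Adj x y := match x, y with
    | Sum.inl a, Sum.inl b => G.Adj a b
    | Sum.inr a, Sum.inr b => H.Adj a b
    | _, _ => False
  symm := ⟨by
    rintro (a | a) (b | b) h <;> simp_all <;> exact h.symm⟩
  loopless := ⟨by
    rintro (a | a) h <;> simp_all⟩

/-- `k` disjoint copies of a graph. -/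
def copies (k : ℕ) (G : SimpleGraph α) : SimpleGraph (Fin k × α) where
  Adj p q := p.1 = q.1 ∧ G.Adj p.2 q.2
  symm := ⟨fun p q h => ⟨h.1.symm, h.2.symm⟩⟩
  loopless := ⟨fun p h => G.loopless.irrefl _ h.2⟩

/-- The join `K₁ + H` of a single vertex with `H`. -/
def joinK1 (H : SimpleGraph β) : SimpleGraph (Unit ⊕ β) where
  Adj x y := match x, y with
    | Sum.inl _, Sum.inl _ => False
    | Sum.inl _, Sum.inr _ => True
    | Sum.inr _, Sum.inl _ => True
    | Sum.inr a, Sum.inr b => H.Adj a b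
  symm := ⟨by
    rintro (a | a) (b | b) h <;> simp_all <;> exact h.symm⟩
  loopless := ⟨by
    rintro (a | a) h <;> simp_all⟩

/-- `w` strongly resolves the pair `u, v`. -/
def StronglyResolves (G : SimpleGraph α) (w u v : α) : Prop :=
  G.edist w u = G.edist w v + G.edist v u ∨ G.edist w v = G.edist w u + G.edist u v

/-- A strong metric generator. -/
def IsStrongGenerator (G : SimpleGraph α) (S : Finset α) : Prop :=
  ∀ u v : α, u ≠ v → ∃ w ∈ S, StronglyResolves G w u v

/-- The strong metric dimension. -/
noncomputable def sdim (G : SimpleGraph α) : ℕ :=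
  sInf {k | ∃ S : Finset α, IsStrongGenerator G S ∧ S.card = k}

/-- A vertex cover. -/
def IsVertexCover (G : SimpleGraph α) (S : Finset α) : Prop :=
  ∀ ⦃u v : α⦄, G.Adj u v → u ∈ S ∨ v ∈ S

/-- The vertex cover number `α(G)`. -/
noncomputable def vcNum (G : SimpleGraph α) : ℕ :=
  sInf {k | ∃ S : Finset α, IsVertexCover G S ∧ S.card = k}

/-- The independence number `β(G)`. -/
noncomputable def indepNum (G : SimpleGraph α) : ℕ :=
  sSup {k | ∃ S : Finset α, (∀ u ∈ S, ∀ v ∈ S, ¬ G.Adj u v) ∧ S.card = k}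

/-!
Every pair `u ≠ v` is strongly resolved by both ends of some mutually maximally distant pair:
extend a `v`–`u` geodesic beyond `u` to a vertex `u'` maximally distant from `v`, then a
`u'`–`v` geodesic beyond `v` to a vertex `v'` maximally distant from `u'`. Conversely, a
mutually maximally distant pair `u, v` is strongly resolved only by `u` and `v` themselves.
So a set is a strong metric generator as soon as it covers the edges of `G_SR`, and the
boundary vertices of a strong metric generator cover them.
-/

variable {G : SimpleGraph α}

lemma sdim_le_card {S : Finset α} (hS : IsStrongGenerator G S) : sdim G ≤ S.card :=
  Nat.sInf_le ⟨S, hS, rfl⟩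

lemma exists_isStrongGenerator_card_eq_sdim [Finite α] (G : SimpleGraph α) :
    ∃ S, IsStrongGenerator G S ∧ S.card = sdim G := by
  have := Fintype.ofFinite α
  refine Nat.sInf_mem (s := {k | ∃ S, IsStrongGenerator G S ∧ S.card = k})
    ⟨_, Finset.univ, fun u _ _ => ⟨u, Finset.mem_univ u, Or.inr ?_⟩, rfl⟩
  rw [edist_self, zero_add]

lemma vcNum_le_card {S : Finset α} (hS : IsVertexCover G S) : vcNum G ≤ S.card :=
  Nat.sInf_le ⟨S, hS, rfl⟩

lemma exists_isVertexCover_card_eq_vcNum [Finite α] (G : SimpleGraph α) :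
    ∃ S, IsVertexCover G S ∧ S.card = vcNum G := by
  have := Fintype.ofFinite α
  exact Nat.sInf_mem (s := {k | ∃ S, IsVertexCover G S ∧ S.card = k})
    ⟨_, Finset.univ, fun u _ _ => Or.inl (Finset.mem_univ u), rfl⟩

theorem _root_.SimpleGraph.Reachable.exists_adj_dist_lt {v w : α}
    (h : G.Reachable v w) (hne : v ≠ w) : ∃ x, G.Adj v x ∧ G.dist x w < G.dist v w := by
  obtain ⟨p, hp⟩ := h.exists_walk_length_eq_dist
  cases p with
  | nil => exact absurd rfl hne
  | cons hadj q =>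
    refine ⟨_, hadj, ?_⟩
    have := dist_le q
    rw [Walk.length_cons] at hp
    omega

theorem _root_.SimpleGraph.Connected.edist_eq_dist (hG : G.Connected) (u v : α) :
    G.edist u v = G.dist u v :=
  (hG u v).coe_dist_eq_edist.symm

lemma maxDistant_iff_dist (hG : G.Connected) {u v : α} :
    MaxDistant G u v ↔ ∀ w, G.Adj u w → G.dist v w ≤ G.dist u v := by
  simp only [MaxDistant, hG.edist_eq_dist, Nat.cast_le]

lemma stronglyResolves_iff_dist (hG : G.Connected) {w u v : α} :
    StronglyResolves G w u v ↔
      G.dist w u = G.dist w v + G.dist v u ∨ G.dist w v = G.dist w u + G.dist u v := by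
  simp only [StronglyResolves, hG.edist_eq_dist]
  norm_cast

lemma exists_dist_eq_add_maxDistant [Finite α] (hG : G.Connected) (v u : α) :
    ∃ u', G.dist v u' = G.dist v u + G.dist u u' ∧ MaxDistant G u' v := by
  obtain ⟨u', hu' : G.dist v u' = G.dist v u + G.dist u u', hmax⟩ := Set.exists_max_image
    {x | G.dist v x = G.dist v u + G.dist u x} (G.dist v) (Set.toFinite _) ⟨u, by simp⟩
  refine ⟨u', hu', (maxDistant_iff_dist hG).2 fun w hw => ?_⟩
  -- a neighbour `w` of `u'` farther from `v` would still see `u` on a geodesic from `v`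
  by_contra! hfar
  rw [dist_comm] at hfar
  have hvw : G.dist v w ≤ G.dist v u + G.dist u w := hG.dist_triangle
  have huw : G.dist u w ≤ G.dist u u' + G.dist u' w := hG.dist_triangle
  have hw1 : G.dist u' w = 1 := dist_eq_one_iff_adj.2 hw
  have := hmax w (show G.dist v w = G.dist v u + G.dist u w by omega)
  omega

lemma MaxDistant.of_dist_eq_add (hG : G.Connected) {u v v' : α} (h : MaxDistant G u v)
    (hv' : G.dist u v' = G.dist u v + G.dist v v') : MaxDistant G u v' := by
  rw [maxDistant_iff_dist hG] at h ⊢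
  intro w hw
  have hvw := h w hw
  have hv'w : G.dist v' w ≤ G.dist v' v + G.dist v w := hG.dist_triangle
  simp only [dist_comm (u := v')] at *
  omega

lemma exists_mmd_stronglyResolves [Finite α] (hG : G.Connected) {u v : α} (huv : u ≠ v) :
    ∃ u' v', u' ≠ v' ∧ MMD G u' v' ∧
      StronglyResolves G u' u v ∧ StronglyResolves G v' u v := by
  obtain ⟨u', hu', hu'max⟩ := exists_dist_eq_add_maxDistant hG v u
  obtain ⟨v', hv', hv'max⟩ := exists_dist_eq_add_maxDistant hG u' v
  have hpos : 0 < G.dist v u := hG.pos_dist_of_ne huv.symm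
  have hu'v' : G.dist u' v' ≤ G.dist u' u + G.dist u v' := hG.dist_triangle
  have huv' : G.dist u v' ≤ G.dist u v + G.dist v v' := hG.dist_triangle
  refine ⟨u', v', ?_, ⟨hu'max.of_dist_eq_add hG hv', hv'max⟩, ?_, ?_⟩
  · rintro rfl
    simp only [dist_self] at hv'
    simp only [dist_comm] at *
    omega
  all_goals
    rw [stronglyResolves_iff_dist hG]
    simp only [dist_comm] at *
    omega

lemma eq_of_maxDistant_of_dist_eq_add (hG : G.Connected) {w u v : α} (hv : MaxDistant G v u)
    (h : G.dist w u = G.dist w v + G.dist v u) : w = v := by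
  by_contra! hwv
  obtain ⟨x, hx, hxw⟩ := (hG v w).exists_adj_dist_lt hwv.symm
  have hux : G.dist u x ≤ G.dist v u := (maxDistant_iff_dist hG).1 hv x hx
  have huw : G.dist u w ≤ G.dist u x + G.dist x w := hG.dist_triangle
  simp only [dist_comm] at *
  omega

lemma StronglyResolves.eq_or_eq_of_mmd (hG : G.Connected) {w u v : α}
    (h : StronglyResolves G w u v) (huv : MMD G u v) : w = u ∨ w = v := by
  rcases (stronglyResolves_iff_dist hG).1 h with h | h
  · exact Or.inr (eq_of_maxDistant_of_dist_eq_add hG huv.2 h)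
  · exact Or.inl (eq_of_maxDistant_of_dist_eq_add hG huv.1 h)

lemma IsVertexCover.isStrongGenerator_map_subtype [Finite α] (hG : G.Connected)
    {T : Finset (boundary G)} (hT : IsVertexCover (srGraph G) T) :
    IsStrongGenerator G (T.map (Function.Embedding.subtype _)) := by
  intro u v huv
  obtain ⟨u', v', hne, hmmd, hu', hv'⟩ := exists_mmd_stronglyResolves hG huv
  have hadj : (srGraph G).Adj ⟨u', v', hne, hmmd⟩ ⟨v', u', hne.symm, hmmd.2, hmmd.1⟩ :=
    ⟨hne, hmmd⟩
  rcases hT hadj with h | h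
  · exact ⟨u', Finset.mem_map_of_mem _ h, hu'⟩
  · exact ⟨v', Finset.mem_map_of_mem _ h, hv'⟩

open Classical in
lemma IsStrongGenerator.isVertexCover_subtype (hG : G.Connected) {S : Finset α}
    (hS : IsStrongGenerator G S) : IsVertexCover (srGraph G) (S.subtype (· ∈ boundary G)) := by
  intro u v ⟨huv, hmmd⟩
  obtain ⟨w, hw, hres⟩ := hS u v huv
  rcases hres.eq_or_eq_of_mmd hG hmmd with rfl | rfl
  · exact Or.inl (Finset.mem_subtype.2 hw)
  · exact Or.inr (Finset.mem_subtype.2 hw)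

theorem stmt_9 [Fintype α] (G : SimpleGraph α) (hG : G.Connected) :
    sdim G = vcNum (srGraph G) := by
  classical
  obtain ⟨T, hT, hTcard⟩ := exists_isVertexCover_card_eq_vcNum (srGraph G)
  obtain ⟨S, hS, hScard⟩ := exists_isStrongGenerator_card_eq_sdim G
  apply le_antisymm
  · calc sdim G ≤ (T.map (Function.Embedding.subtype _)).card :=
          sdim_le_card (hT.isStrongGenerator_map_subtype hG)
      _ = vcNum (srGraph G) := by rw [Finset.card_map, hTcard]
  · calc vcNum (srGraph G) ≤ (S.subtype (· ∈ boundary G)).card :=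
          vcNum_le_card (hS.isVertexCover_subtype hG)
      _ ≤ sdim G := hScard ▸ (Finset.card_subtype _ _).trans_le (Finset.card_filter_le _ _)

end Paper
end

section
/- For any integers n, n' ≥ 2, dim_s(K_n ∘ N_{n'}) = n(n'−1), where N_{n'} is the empty graph on n' vertices; equivalently, the strong metric dimension of the complete n-partite graph with all parts of size n' is n(n'−1). -/
/-!
In `K_n ∘ N_{n'}` two distinct vertices are at distance `1` if they lie in different parts and at
distance `2` (the diameter) if they lie in the same part. A pair at diametral distance can only be
strongly resolved by one of its own endpoints, so a strong metric generator omits at most one vertex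
of each part: it has at least `n n' - n` vertices. Conversely, omitting one vertex `(a, b₀)` from each
part gives a generator: the only pairs without an endpoint in it are `(a, b₀), (a', b₀)` with
`a ≠ a'`, and `(a, b₁)` resolves such a pair since it is at distance `2` from `(a, b₀)` and at
distance `1` from `(a', b₀)`.
-/

open SimpleGraph

namespace Paper

variable {α β : Type*}

section StrongResolving

variable {G : SimpleGraph α}

lemma stronglyResolves_left (u v : α) : StronglyResolves G u u v :=
  Or.inr (by simp)

lemma stronglyResolves_right (u v : α) : StronglyResolves G v u v :=
  Or.inl (by simp)

lemma StronglyResolves.eq_or_eq_of_diametral {u v w : α}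
    (hdiam : ∀ x y, G.edist x y ≤ G.edist u v) (hfin : G.edist u v ≠ ⊤)
    (h : StronglyResolves G w u v) : w = u ∨ w = v := by
  have hfin' : G.edist v u ≠ ⊤ := G.edist_comm ▸ hfin
  rcases h with h | h
  · right
    have : G.edist w v + G.edist v u ≤ 0 + G.edist v u := by
      rw [← h, zero_add]
      exact (hdiam w u).trans_eq G.edist_comm
    exact edist_eq_zero_iff.mp (nonpos_iff_eq_zero.mp (WithTop.le_of_add_le_add_right hfin' this))
  · left
    have : G.edist w u + G.edist u v ≤ 0 + G.edist u v := by
      rw [← h, zero_add]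
      exact hdiam w v
    exact edist_eq_zero_iff.mp (nonpos_iff_eq_zero.mp (WithTop.le_of_add_le_add_right hfin this))

lemma IsStrongGenerator.mem_or_mem_of_diametral {S : Finset α} (hS : IsStrongGenerator G S)
    {u v : α} (huv : u ≠ v) (hdiam : ∀ x y, G.edist x y ≤ G.edist u v)
    (hfin : G.edist u v ≠ ⊤) : u ∈ S ∨ v ∈ S := by
  obtain ⟨w, hwS, hw⟩ := hS u v huv
  rcases hw.eq_or_eq_of_diametral hdiam hfin with rfl | rfl
  · exact Or.inl hwS
  · exact Or.inr hwS

end StrongResolving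

section CompleteMultipartite

lemma lexProd_top_bot_adj {p q : α × β} :
    (lexProd (⊤ : SimpleGraph α) (⊥ : SimpleGraph β)).Adj p q ↔ p.1 ≠ q.1 := by
  simp [lexProd]

lemma lexProd_top_bot_edist_of_fst_ne {p q : α × β} (h : p.1 ≠ q.1) :
    (lexProd (⊤ : SimpleGraph α) (⊥ : SimpleGraph β)).edist p q = 1 :=
  edist_eq_one_iff_adj.mpr (lexProd_top_bot_adj.mpr h)

lemma lexProd_top_bot_edist_of_fst_eq [Nontrivial α] {p q : α × β} (hpq : p ≠ q)
    (h : p.1 = q.1) : (lexProd (⊤ : SimpleGraph α) (⊥ : SimpleGraph β)).edist p q = 2 := by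
  obtain ⟨c, hc⟩ := exists_ne p.1
  refine edist_eq_two_iff.mpr ⟨hpq, fun hadj => lexProd_top_bot_adj.mp hadj h, (c, p.2), ?_⟩
  rw [mem_commonNeighbors, lexProd_top_bot_adj, lexProd_top_bot_adj]
  exact ⟨hc.symm, h ▸ hc.symm⟩

lemma lexProd_top_bot_edist_le_two [Nontrivial α] (p q : α × β) :
    (lexProd (⊤ : SimpleGraph α) (⊥ : SimpleGraph β)).edist p q ≤ 2 := by
  by_cases hpq : p = q
  · simp [hpq]
  by_cases h : p.1 = q.1
  · exact (lexProd_top_bot_edist_of_fst_eq hpq h).le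
  · rw [lexProd_top_bot_edist_of_fst_ne h]
    norm_num

variable [Fintype α] [Fintype β]

lemma lexProd_top_bot_isStrongGenerator_erase [DecidableEq β] {b₀ b₁ : β} (hb : b₁ ≠ b₀) :
    IsStrongGenerator (lexProd (⊤ : SimpleGraph α) (⊥ : SimpleGraph β))
      (Finset.univ ×ˢ (Finset.univ.erase b₀)) := by
  have hmem : ∀ p : α × β, p ∈ Finset.univ ×ˢ (Finset.univ.erase b₀) ↔ p.2 ≠ b₀ := by simp
  intro u v huv
  by_cases hu : u.2 ≠ b₀
  · exact ⟨u, (hmem u).mpr hu, stronglyResolves_left u v⟩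
  by_cases hv : v.2 ≠ b₀
  · exact ⟨v, (hmem v).mpr hv, stronglyResolves_right u v⟩
  rw [not_ne_iff] at hu hv
  have hfst : u.1 ≠ v.1 := fun h => huv (Prod.ext h (hu.trans hv.symm))
  have : Nontrivial α := ⟨u.1, v.1, hfst⟩
  have hwu : (u.1, b₁) ≠ u := fun h => hb ((congrArg Prod.snd h).trans hu)
  refine ⟨(u.1, b₁), (hmem _).mpr hb, Or.inl ?_⟩
  rw [lexProd_top_bot_edist_of_fst_eq hwu rfl,
    lexProd_top_bot_edist_of_fst_ne (p := (u.1, b₁)) hfst,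
    lexProd_top_bot_edist_of_fst_ne hfst.symm]
  norm_num

lemma IsStrongGenerator.card_compl_le_of_lexProd_top_bot [Nontrivial α] [DecidableEq α]
    [DecidableEq β] {S : Finset (α × β)}
    (hS : IsStrongGenerator (lexProd (⊤ : SimpleGraph α) (⊥ : SimpleGraph β)) S) :
    Sᶜ.card ≤ Fintype.card α := by
  refine Finset.card_le_card_of_injOn Prod.fst (fun _ _ => Finset.mem_univ _) ?_
  intro p hp q hq hpq
  by_contra hne
  have hdiam := lexProd_top_bot_edist_of_fst_eq (β := β) hne hpq
  rcases hS.mem_or_mem_of_diametral hne (hdiam ▸ lexProd_top_bot_edist_le_two)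
    (by simp [hdiam]) with h | h
  · exact Finset.mem_compl.mp hp h
  · exact Finset.mem_compl.mp hq h

lemma IsStrongGenerator.card_ge_of_lexProd_top_bot [Nontrivial α] {S : Finset (α × β)}
    (hS : IsStrongGenerator (lexProd (⊤ : SimpleGraph α) (⊥ : SimpleGraph β)) S) :
    Fintype.card α * (Fintype.card β - 1) ≤ S.card := by
  classical
  have hcompl := hS.card_compl_le_of_lexProd_top_bot
  have htotal := Finset.card_add_card_compl S
  rw [Fintype.card_prod] at htotal
  rw [Nat.mul_sub_one]
  omega

theorem sdim_lexProd_top_bot [Nontrivial α] [Nontrivial β] :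
    sdim (lexProd (⊤ : SimpleGraph α) (⊥ : SimpleGraph β)) =
      Fintype.card α * (Fintype.card β - 1) := by
  classical
  obtain ⟨b₀, b₁, hb⟩ := exists_pair_ne β
  have hgen := lexProd_top_bot_isStrongGenerator_erase (α := α) hb.symm
  have hcard : (Finset.univ ×ˢ (Finset.univ.erase b₀) : Finset (α × β)).card =
      Fintype.card α * (Fintype.card β - 1) := by
    simp [Finset.card_erase_of_mem]
  refine le_antisymm (Nat.sInf_le ⟨_, hgen, hcard⟩) (le_csInf ⟨_, _, hgen, hcard⟩ ?_)
  rintro _ ⟨T, hT, rfl⟩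
  exact hT.card_ge_of_lexProd_top_bot

end CompleteMultipartite

theorem stmt_19 (n n' : ℕ) (hn : 2 ≤ n) (hn' : 2 ≤ n') :
    sdim (lexProd (⊤ : SimpleGraph (Fin n)) (⊥ : SimpleGraph (Fin n'))) =
      n * (n' - 1) := by
  have : Nontrivial (Fin n) := Fin.nontrivial_iff_two_le.mpr hn
  have : Nontrivial (Fin n') := Fin.nontrivial_iff_two_le.mpr hn'
  simpa using sdim_lexProd_top_bot (α := Fin n) (β := Fin n')

end Paper
end
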